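/- Let H = H₁ + H₂ where S = ker(H₁) and H₁ ⪰ J·Π_{S⊥} with J > 0 and H₂ Hermitian. Then λ(H) ≥ min(λ(H₂), J − ‖H₂‖). In particular, if every unit vector in S has ⟨v|H₂|v⟩ ≥ β and J ≥ β + ‖H₂‖, then λ(H restricted to S) ≥ β. -/

import Mathlib

open Matrix
open scoped Kronecker Matrix.Norms.L2Operator ComplexOrder

noncomputable section

/-- The positive semidefinite square root, as `Matrix.PosSemidef.sqrt` was defined in Mathlib
(December 2024); the declaration is gone from the current library. -/
noncomputable def Matrix.PosSemidef.sqrt {𝕜 : Type*} [RCLike 𝕜] {n : Type*} [Fintype n]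
    [DecidableEq n] {A : Matrix n n 𝕜} (hA : A.PosSemidef) : Matrix n n 𝕜 :=
  hA.1.eigenvectorUnitary.1 * diagonal ((↑) ∘ Real.sqrt ∘ hA.1.eigenvalues) *
    (star hA.1.eigenvectorUnitary : Matrix n n 𝕜)

/-- Trace norm `‖A‖₁ = tr √(Aᴴ A)`. -/
noncomputable def traceNorm {m : ℕ} (A : Matrix (Fin m) (Fin m) ℂ) : ℝ :=
  ((Matrix.posSemidef_conjTranspose_mul_self A).sqrt.trace).re

/-- Quadratic form `Re ⟨v, H v⟩`. -/
noncomputable def quadForm {m : Type*} [Fintype m] (H : Matrix m m ℂ) (v : m → ℂ) : ℝ :=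
  (dotProduct (star v) (H *ᵥ v)).re

/-- Squared Euclidean norm of a vector. -/
noncomputable def vnormSq {m : Type*} [Fintype m] (v : m → ℂ) : ℝ :=
  (dotProduct (star v) v).re

/-! Since `1 - Pr` is a star projection, `H₁ ⪰ J • (1 - Pr) ⪰ 0`, so adding `H₁` can only raise
the energy `⟨v|H₂|v⟩ ≥ λ(H₂)`; on `S = ker H₁` the energy of `H₁ + H₂` is that of `H₂`. -/

open scoped MatrixOrder

namespace Matrix

variable {m : Type*} [Fintype m]

theorem PosSemidef.of_sub_smul_one_sub [DecidableEq m] {A P : Matrix m m ℂ}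
    (hP : IsStarProjection P) {c : ℝ} (hc : 0 ≤ c) (h : (A - c • (1 - P)).PosSemidef) :
    A.PosSemidef :=
  ((hP.one_sub.nonneg.posSemidef.smul hc).nonneg.trans h).posSemidef

theorem quadForm_add (A B : Matrix m m ℂ) (v : m → ℂ) :
    quadForm (A + B) v = quadForm A v + quadForm B v := by
  simp only [quadForm, add_mulVec, dotProduct_add, Complex.add_re]

theorem PosSemidef.quadForm_nonneg {A : Matrix m m ℂ} (hA : A.PosSemidef) (v : m → ℂ) :
    0 ≤ quadForm A v :=
  hA.re_dotProduct_nonneg v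

theorem quadForm_eq_zero_of_mulVec_eq_zero {A : Matrix m m ℂ} {v : m → ℂ} (hv : A *ᵥ v = 0) :
    quadForm A v = 0 := by
  simp [quadForm, hv]

theorem PosSemidef.quadForm_le_quadForm_add {A : Matrix m m ℂ} (hA : A.PosSemidef)
    (B : Matrix m m ℂ) (v : m → ℂ) : quadForm B v ≤ quadForm (A + B) v := by
  rw [quadForm_add]
  linarith [hA.quadForm_nonneg v]

theorem quadForm_add_of_mulVec_eq_zero {A : Matrix m m ℂ} {v : m → ℂ} (hv : A *ᵥ v = 0)
    (B : Matrix m m ℂ) : quadForm (A + B) v = quadForm B v := by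
  rw [quadForm_add, quadForm_eq_zero_of_mulVec_eq_zero hv, zero_add]

end Matrix

theorem weak_projection_lemma_general {n : ℕ} (H₁ H₂ Pr : Matrix (Fin n) (Fin n) ℂ)
    (hPr : Pr.IsHermitian) (hPr2 : Pr * Pr = Pr)
    (hker : ∀ v : Fin n → ℂ, H₁ *ᵥ v = 0 ↔ Pr *ᵥ v = v)
    (J : ℝ) (hJ : 0 < J)
    (hgap : (H₁ - J • ((1 : Matrix (Fin n) (Fin n) ℂ) - Pr)).PosSemidef)
    (lam2 : ℝ)
    (hlam2 : IsLeast {r | ∃ v, vnormSq v = 1 ∧ quadForm H₂ v = r} lam2) :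
    (∀ v : Fin n → ℂ, vnormSq v = 1 → min lam2 (J - ‖H₂‖) ≤ quadForm (H₁ + H₂) v) ∧
    (∀ β : ℝ, (∀ v : Fin n → ℂ, Pr *ᵥ v = v → vnormSq v = 1 → β ≤ quadForm H₂ v) →
      β + ‖H₂‖ ≤ J →
      ∀ v : Fin n → ℂ, Pr *ᵥ v = v → vnormSq v = 1 → β ≤ quadForm (H₁ + H₂) v) := by
  have hH₁ : H₁.PosSemidef := .of_sub_smul_one_sub ⟨hPr2, hPr⟩ hJ.le hgap
  refine ⟨fun v hv => ?_, fun β hβ _ v hv hv1 => ?_⟩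
  · calc min lam2 (J - ‖H₂‖) ≤ lam2 := min_le_left _ _
      _ ≤ quadForm H₂ v := hlam2.2 ⟨v, hv, rfl⟩
      _ ≤ quadForm (H₁ + H₂) v := hH₁.quadForm_le_quadForm_add H₂ v
  · rw [quadForm_add_of_mulVec_eq_zero ((hker v).mpr hv)]
    exact hβ v hv hv1

/-- weak projection lemma: if `S = ker H₁` (projector `Pr`) and
`H₁ ⪰ J·Π_{S⊥}` then `λ(H₁ + H₂) ≥ min(λ(H₂), J − ‖H₂‖)`; and if every unit vector in `S`
has `⟨v|H₂|v⟩ ≥ β` with `J ≥ β + ‖H₂‖`, then `λ((H₁+H₂)|_S) ≥ β`. -/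
theorem weak_projection_lemma {n : ℕ} (H₁ H₂ Pr : Matrix (Fin n) (Fin n) ℂ)
    (hH₁ : H₁.IsHermitian) (hH₂ : H₂.IsHermitian)
    (hPr : Pr.IsHermitian) (hPr2 : Pr * Pr = Pr)
    (hker : ∀ v : Fin n → ℂ, H₁ *ᵥ v = 0 ↔ Pr *ᵥ v = v)
    (J : ℝ) (hJ : 0 < J)
    (hgap : (H₁ - J • ((1 : Matrix (Fin n) (Fin n) ℂ) - Pr)).PosSemidef)
    (lam2 : ℝ)
    (hlam2 : IsLeast {r | ∃ v, vnormSq v = 1 ∧ quadForm H₂ v = r} lam2) :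
    (∀ v : Fin n → ℂ, vnormSq v = 1 → min lam2 (J - ‖H₂‖) ≤ quadForm (H₁ + H₂) v) ∧
    (∀ β : ℝ, (∀ v : Fin n → ℂ, Pr *ᵥ v = v → vnormSq v = 1 → β ≤ quadForm H₂ v) →
      β + ‖H₂‖ ≤ J →
      ∀ v : Fin n → ℂ, Pr *ᵥ v = v → vnormSq v = 1 → β ≤ quadForm (H₁ + H₂) v) :=
  weak_projection_lemma_general H₁ H₂ Pr hPr hPr2 hker J hJ hgap lam2 hlam2
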